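/- arXiv:1306.5506 — 5 statements merged into one kernel-verified Lean document; each statement's English description precedes it below -/
import Mathlib

section
/- Let X and Y be disjoint closed subsets of the Riemann sphere, and let x, y be points not in X ∪ Y. If x and y lie in the same connected component of the complement of X and in the same connected component of the complement of Y, then x and y lie in the same connected component of the complement of X ∪ Y. -/
/-!
The proof rests on Eilenberg's criterion: for a compact `K ⊆ ℂ` and points `p, q` of the sphere
off `K`, `p` and `q` lie in the same component of the complement of `K` iff the Möbius function
`(z - p) / (z - q)` has a continuous logarithm on `K`. Having such a logarithm is locally
constant in `p`, which gives one direction. Conversely, if a bounded component `U` of `ℂ \ K`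
contains `p` but not `q`, the logarithm on `frontier U ⊆ K` extends over `closure U`, producing a
nonvanishing function on `ℂ` equal to `z - p` on a large circle around `U`; such a function has a
logarithm on the circle, while `z - p` has none.

Logarithms on the disjoint compact sets `X` and `Y` glue to one on `X ∪ Y`, so the criterion
gives the theorem once a homeomorphism of the sphere has moved `x` to `∞`.
-/

open Complex Set Filter Metric Bornology Topology OnePoint
open scoped Real

local notation "ℂ∞" => OnePoint ℂ

lemma closure_connectedComponentIn_compl_subset {α : Type*} [TopologicalSpace α]
    [LocallyConnectedSpace α] {F : Set α} (hF : IsClosed F) (a : α) :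
    closure (connectedComponentIn Fᶜ a) ⊆ connectedComponentIn Fᶜ a ∪ F := by
  intro z hz
  refine or_iff_not_imp_right.mpr fun hzF => ?_
  obtain ⟨w, hwz, hwa⟩ := mem_closure_iff.mp hz _ hF.isOpen_compl.connectedComponentIn
    (mem_connectedComponentIn hzF)
  rw [connectedComponentIn_eq hwa, ← connectedComponentIn_eq hwz]
  exact mem_connectedComponentIn hzF

lemma frontier_connectedComponentIn_compl_subset {α : Type*} [TopologicalSpace α]
    [LocallyConnectedSpace α] {F : Set α} (hF : IsClosed F) (a : α) :
    frontier (connectedComponentIn Fᶜ a) ⊆ F := by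
  rw [hF.isOpen_compl.connectedComponentIn.frontier_eq]
  rintro z ⟨hz, hzC⟩
  exact (closure_connectedComponentIn_compl_subset hF a hz).resolve_left hzC

lemma OnePoint.image_coe_connectedComponentIn_subset {X : Type*} [TopologicalSpace X]
    {F : Set X} {a : X} (ha : a ∉ F) :
    (↑) '' connectedComponentIn Fᶜ a ⊆ connectedComponentIn ((↑) '' F : Set (OnePoint X))ᶜ a :=
  (continuous_coe.continuousOn.image_connectedComponentIn_subset ha).trans
    (connectedComponentIn_mono _ (image_compl_subset coe_injective))

lemma OnePoint.exists_isCompact_image_coe_eq {X : Type*} [TopologicalSpace X] {S : Set (OnePoint X)}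
    (hS : IsClosed S) (hS_infty : ∞ ∉ S) : ∃ K : Set X, IsCompact K ∧ (↑) '' K = S := by
  have himg : (↑) '' ((↑) ⁻¹' S : Set X) = S := image_preimage_eq_of_subset fun p hp =>
    ne_infty_iff_exists.mp fun h => hS_infty (h ▸ hp)
  exact ⟨_, (isClosed_image_coe.mp (by rwa [himg])).2, himg⟩

lemma Homeomorph.apply_mem_connectedComponentIn_image_iff {α β : Type*} [TopologicalSpace α]
    [TopologicalSpace β] (e : α ≃ₜ β) {F : Set α} {x y : α} (hx : x ∈ F) :
    e y ∈ connectedComponentIn (e '' F) (e x) ↔ y ∈ connectedComponentIn F x := by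
  rw [← e.image_connectedComponentIn hx, e.injective.mem_set_image]

def HasContLog (K : Set ℂ) (f : ℂ → ℂ) : Prop :=
  ∃ g : ℂ → ℂ, ContinuousOn g K ∧ ∀ z ∈ K, exp (g z) = f z

namespace HasContLog

variable {K : Set ℂ} {f g h : ℂ → ℂ}

lemma ne_zero (hf : HasContLog K f) {z : ℂ} (hz : z ∈ K) : f z ≠ 0 := by
  obtain ⟨L, -, hL⟩ := hf
  exact hL z hz ▸ exp_ne_zero _

lemma congr (hf : HasContLog K f) (hfg : EqOn f g K) : HasContLog K g := by
  obtain ⟨L, hLc, hL⟩ := hf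
  exact ⟨L, hLc, fun z hz => (hL z hz).trans (hfg hz)⟩

lemma div_symm (hf : HasContLog K fun z => f z / g z) : HasContLog K fun z => g z / f z := by
  obtain ⟨L, hLc, hL⟩ := hf
  exact ⟨fun z => -L z, hLc.neg, fun z hz => by rw [exp_neg, hL z hz, inv_div]⟩

lemma div_trans (hfg : HasContLog K fun z => f z / g z) (hgh : HasContLog K fun z => g z / h z) :
    HasContLog K fun z => f z / h z := by
  have hg {z : ℂ} (hz : z ∈ K) : g z ≠ 0 := (div_ne_zero_iff.mp (hgh.ne_zero hz)).1
  obtain ⟨L, hLc, hL⟩ := hfg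
  obtain ⟨M, hMc, hM⟩ := hgh
  refine ⟨fun z => L z + M z, hLc.add hMc, fun z hz => ?_⟩
  rw [exp_add, hL z hz, hM z hz, div_mul_div_cancel₀ (hg hz)]

/-- `f / c` takes values in the slit plane, where `log` is continuous. -/
lemma of_norm_sub_lt (hf : ContinuousOn f K) {c : ℂ} (hfc : ∀ z ∈ K, ‖f z - c‖ < ‖c‖) :
    HasContLog K f := by
  have hslit : ∀ z ∈ K, f z / c ∈ slitPlane := fun z hz => by
    have hc : 0 < ‖c‖ := (norm_nonneg _).trans_lt (hfc z hz)
    have hsplit : f z / c = 1 + (f z - c) / c := by field_simp [norm_pos_iff.mp hc]; ring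
    rw [hsplit]
    apply mem_slitPlane_of_norm_lt_one
    rw [norm_div, div_lt_one hc]
    exact hfc z hz
  refine ⟨fun z => log c + log (f z / c), continuousOn_const.add ((hf.div_const c).clog hslit),
    fun z hz => ?_⟩
  have hc : c ≠ 0 := norm_pos_iff.mp ((norm_nonneg _).trans_lt (hfc z hz))
  rw [exp_add, exp_log hc, exp_log (slitPlane_ne_zero (hslit z hz)), mul_div_cancel₀ _ hc]

lemma union {K₁ K₂ : Set ℂ} (h₁ : IsClosed K₁) (h₂ : IsClosed K₂) (hd : Disjoint K₁ K₂)
    (hf₁ : HasContLog K₁ f) (hf₂ : HasContLog K₂ f) : HasContLog (K₁ ∪ K₂) f := by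
  classical
  obtain ⟨L₁, hL₁c, hL₁⟩ := hf₁
  obtain ⟨L₂, hL₂c, hL₂⟩ := hf₂
  have hEq₁ : EqOn (K₁.piecewise L₁ L₂) L₁ K₁ := K₁.piecewise_eqOn L₁ L₂
  have hEq₂ : EqOn (K₁.piecewise L₁ L₂) L₂ K₂ :=
    (K₁.piecewise_eqOn_compl L₁ L₂).mono hd.subset_compl_left
  refine ⟨K₁.piecewise L₁ L₂,
    ((hL₁c.congr hEq₁).union_of_isClosed (hL₂c.congr hEq₂) h₁ h₂), ?_⟩
  rintro z (hz | hz)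
  · rw [hEq₁ hz, hL₁ z hz]
  · rw [hEq₂ hz, hL₂ z hz]

/-- Lifting through the covering map `exp : ℂ → ℂ \ {0}`, possible since `ℂ` is simply connected. -/
lemma of_continuous (hf : Continuous f) (hf0 : ∀ z, f z ≠ 0) : HasContLog K f := by
  obtain ⟨L, ⟨-, hL⟩, -⟩ := isCoveringMapOn_exp.existsUnique_continuousMap_lifts ⟨f, hf⟩
    (a₀ := 0) (exp_log (hf0 0)) hf0
  exact ⟨L, L.continuous.continuousOn, fun z _ => congrFun hL z⟩

end HasContLog

/-- `t ↦ L (a + R e^{it}) - i t` would be a continuous logarithm of the constant `R`, hence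
constant, which contradicts the `2π`-periodicity of `circleMap`. -/
lemma not_hasContLog_sub_sphere {a : ℂ} {R : ℝ} (hR : 0 < R) :
    ¬ HasContLog (sphere a R) fun z => z - a := by
  rintro ⟨L, hLc, hL⟩
  have hmem (t : ℝ) : circleMap a R t ∈ sphere a R := circleMap_mem_sphere a hR.le t
  set φ : ℝ → ℂ := fun t => L (circleMap a R t) - t * I
  have hφc : Continuous φ :=
    (hLc.comp_continuous (continuous_circleMap a R) hmem).sub (by fun_prop)
  have hφexp (t : ℝ) : exp (φ t) = R := by
    simp only [φ, exp_sub, hL _ (hmem t), circleMap_sub_center, circleMap_zero]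
    exact mul_div_cancel_right₀ _ (exp_ne_zero _)
  have hφ : φ (2 * π) = φ 0 := isCoveringMap_exp.const_of_comp hφc
    (fun t t' => Subtype.ext (by simp only [hφexp])) _ _
  have hper : circleMap a R (2 * π) = circleMap a R 0 := by simpa using periodic_circleMap a R 0
  simp [φ, hper, I_ne_zero] at hφ

/-- The factor `z - p` of a Möbius map, read as `1` when `p = ∞`. -/
def sphereSub (p : ℂ∞) (z : ℂ) : ℂ := p.elim 1 (z - ·)

@[simp] lemma sphereSub_infty (z : ℂ) : sphereSub ∞ z = 1 := rfl

@[simp] lemma sphereSub_coe (c z : ℂ) : sphereSub c z = z - c := rfl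

lemma continuous_sphereSub (p : ℂ∞) : Continuous (sphereSub p) := by
  induction p using OnePoint.rec with
  | infty => exact continuous_const
  | coe c => exact continuous_id.sub continuous_const

lemma sphereSub_ne_zero {p : ℂ∞} {z : ℂ} (h : p ≠ z) : sphereSub p z ≠ 0 := by
  induction p using OnePoint.rec with
  | infty => simp
  | coe c => exact sub_ne_zero.mpr fun hzc => h (hzc ▸ rfl)

section Criterion

variable {K : Set ℂ}

lemma eventually_hasContLog_sphereSub_div (hK : IsCompact K) {p : ℂ∞}
    (hp : p ∉ ((↑) '' K : Set ℂ∞)) :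
    ∀ᶠ q in 𝓝 p, HasContLog K fun z => sphereSub q z / sphereSub p z := by
  induction p using OnePoint.rec with
  | infty =>
    obtain ⟨R, hR⟩ := hK.isBounded.subset_closedBall 0
    rw [nhds_infty_eq, eventually_sup, eventually_map, eventually_pure,
      coclosedCompact_eq_cocompact, ← cobounded_eq_cocompact]
    refine ⟨?_, ⟨fun _ => 0, continuousOn_const, fun z _ => by simp⟩⟩
    filter_upwards [tendsto_norm_cobounded_atTop.eventually_gt_atTop R] with c hc
    refine HasContLog.of_norm_sub_lt (c := -c)
      (by simpa using (continuous_sub_right c).continuousOn) fun z hz => ?_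
    simpa using (mem_closedBall_zero_iff.mp (hR hz)).trans_lt hc
  | coe c =>
    have hc : c ∉ K := fun h => hp (mem_image_of_mem _ h)
    obtain ⟨ε, hε, hball⟩ := Metric.isOpen_iff.mp hK.isClosed.isOpen_compl c hc
    have hdist : ∀ z ∈ K, ε ≤ ‖z - c‖ := fun z hz =>
      not_lt.mp fun h => hball (mem_ball_iff_norm.mpr h) hz
    have hzc : ∀ z ∈ K, z - c ≠ 0 := fun z hz => norm_pos_iff.mp (hε.trans_le (hdist z hz))
    rw [nhds_coe_eq, eventually_map]
    filter_upwards [ball_mem_nhds c hε] with c' hc'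
    refine HasContLog.of_norm_sub_lt (c := 1) ((continuous_sphereSub _).continuousOn.div
      (continuous_sphereSub _).continuousOn hzc) fun z hz => ?_
    rw [sphereSub_coe, sphereSub_coe, div_sub_one (hzc z hz), norm_div, norm_one,
      div_lt_one (norm_pos_iff.mpr (hzc z hz)), sub_sub_sub_cancel_left, ← dist_eq_norm, dist_comm]
    exact (mem_ball.mp hc').trans_le (hdist z hz)

theorem hasContLog_of_mem_connectedComponentIn (hK : IsCompact K) {p q : ℂ∞}
    (hq : q ∈ connectedComponentIn ((↑) '' K)ᶜ p) :
    HasContLog K fun z => sphereSub p z / sphereSub q z := by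
  have hp : p ∈ ((↑) '' K : Set ℂ∞)ᶜ := connectedComponentIn_nonempty_iff.mp ⟨q, hq⟩
  refine isPreconnected_connectedComponentIn.induction₂'
    (fun p q => HasContLog K fun z => sphereSub p z / sphereSub q z) (fun r hr => ?_)
    (fun _ _ _ _ _ _ => HasContLog.div_trans) (mem_connectedComponentIn hp) hq
  filter_upwards [nhdsWithin_le_nhds
    (eventually_hasContLog_sphereSub_div hK (connectedComponentIn_subset _ _ hr))] with s hs
  exact ⟨hs.div_symm, hs⟩

lemma not_hasContLog_of_frontier_subset {U : Set ℂ} (hU : IsBounded U) (hUK : frontier U ⊆ K)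
    {a : ℂ} (ha : a ∈ U) {q : ℂ∞} (hq : q ∉ ((↑) '' closure U : Set ℂ∞)) :
    ¬ HasContLog K fun z => (z - a) / sphereSub q z := by
  rintro ⟨g, hgc, hg⟩
  obtain ⟨G, hG⟩ := ContinuousMap.exists_restrict_eq (Y := ℂ) isClosed_frontier
    ⟨(frontier U).domRestrict g, (hgc.mono hUK).domRestrict⟩
  have hGg : ∀ z ∈ frontier U, G z = g z := fun z hz => DFunLike.congr_fun hG ⟨z, hz⟩
  have hq0 : ∀ z ∈ closure U, sphereSub q z ≠ 0 := fun z hz =>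
    sphereSub_ne_zero fun h => hq ⟨z, hz, h.symm⟩
  classical
  set H := (closure U).piecewise (fun z => sphereSub q z * exp (G z)) (· - a)
  have hHc : Continuous H := by
    refine continuous_piecewise (fun z hz => ?_)
      ((continuous_sphereSub q).mul (continuous_exp.comp G.continuous)).continuousOn
      (continuous_sub_right a).continuousOn
    have hz' := frontier_closure_subset hz
    rw [hGg z hz', hg z (hUK hz'), mul_div_cancel₀ _ (hq0 z (frontier_subset_closure hz'))]
  have hH0 (z : ℂ) : H z ≠ 0 := by
    dsimp only [H]
    by_cases hz : z ∈ closure U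
    · rw [piecewise_eq_of_mem _ _ _ hz]
      exact mul_ne_zero (hq0 z hz) (exp_ne_zero _)
    · rw [piecewise_eq_of_notMem _ _ _ hz]
      exact sub_ne_zero.mpr fun h => hz (h ▸ subset_closure ha)
  obtain ⟨R, hR⟩ := hU.closure.subset_ball a
  refine not_hasContLog_sub_sphere (pos_of_mem_ball (hR (subset_closure ha)))
    ((HasContLog.of_continuous hHc hH0).congr fun z hz => piecewise_eq_of_notMem _ _ _ fun h => ?_)
  exact (mem_ball.mp (hR h)).ne (mem_sphere.mp hz)

lemma infty_mem_connectedComponentIn_of_not_isBounded {a : ℂ} (ha : a ∉ K)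
    (hC : ¬ IsBounded (connectedComponentIn Kᶜ a)) :
    ∞ ∈ connectedComponentIn ((↑) '' K : Set ℂ∞)ᶜ a := by
  have hcl : (∞ : ℂ∞) ∈ closure ((↑) '' connectedComponentIn Kᶜ a) := by
    refine mem_closure_of_frequently_of_tendsto ?_ tendsto_coe_infty
    rw [coclosedCompact_eq_cocompact, ← cobounded_eq_cocompact]
    exact Frequently.mono hC fun z hz => mem_image_of_mem _ hz
  have hpre : IsPreconnected (insert ∞ ((↑) '' connectedComponentIn Kᶜ a) : Set ℂ∞) :=
    (isPreconnected_connectedComponentIn.image _ continuous_coe.continuousOn).subset_closure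
      (subset_insert _ _) (insert_subset hcl subset_closure)
  refine hpre.subset_connectedComponentIn
    (mem_insert_of_mem _ (mem_image_of_mem _ (mem_connectedComponentIn ha)))
    (insert_subset infty_notMem_image_coe ?_) (mem_insert _ _)
  exact (image_coe_connectedComponentIn_subset ha).trans (connectedComponentIn_subset _ _)

lemma mem_connectedComponentIn_of_hasContLog_of_isBounded (hK : IsClosed K) {a : ℂ} (ha : a ∉ K)
    (hC : IsBounded (connectedComponentIn Kᶜ a)) {q : ℂ∞} (hq : q ∉ ((↑) '' K : Set ℂ∞))
    (h : HasContLog K fun z => (z - a) / sphereSub q z) :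
    q ∈ connectedComponentIn ((↑) '' K)ᶜ (a : ℂ∞) := by
  by_contra hqC
  refine not_hasContLog_of_frontier_subset hC (frontier_connectedComponentIn_compl_subset hK a)
    (mem_connectedComponentIn ha) ?_ h
  rintro ⟨z, hz, rfl⟩
  rcases closure_connectedComponentIn_compl_subset hK a hz with hz | hz
  · exact hqC (image_coe_connectedComponentIn_subset ha (mem_image_of_mem _ hz))
  · exact hq (mem_image_of_mem _ hz)

theorem mem_connectedComponentIn_of_hasContLog (hK : IsClosed K) {p q : ℂ∞}
    (hp : p ∉ ((↑) '' K : Set ℂ∞)) (hq : q ∉ ((↑) '' K : Set ℂ∞))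
    (h : HasContLog K fun z => sphereSub p z / sphereSub q z) :
    q ∈ connectedComponentIn ((↑) '' K)ᶜ p := by
  have key {p q : ℂ∞} (hp : p ∉ ((↑) '' K : Set ℂ∞)) (hq : q ∉ ((↑) '' K : Set ℂ∞))
      (h : HasContLog K fun z => sphereSub p z / sphereSub q z) :
      q ∈ connectedComponentIn ((↑) '' K)ᶜ p ∨ ∞ ∈ connectedComponentIn ((↑) '' K)ᶜ p := by
    induction p using OnePoint.rec with
    | infty => exact Or.inr (mem_connectedComponentIn hp)
    | coe a =>
      have ha : a ∉ K := fun h => hp (mem_image_of_mem _ h)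
      by_cases hC : IsBounded (connectedComponentIn Kᶜ a)
      · exact Or.inl (mem_connectedComponentIn_of_hasContLog_of_isBounded hK ha hC hq h)
      · exact Or.inr (infty_mem_connectedComponentIn_of_not_isBounded ha hC)
  obtain hpq | hp_infty := key hp hq h
  · exact hpq
  obtain hqp | hq_infty := key hq hp h.div_symm
  · rw [← connectedComponentIn_eq hqp]
    exact mem_connectedComponentIn hq
  · rw [connectedComponentIn_eq hp_infty, ← connectedComponentIn_eq hq_infty]
    exact mem_connectedComponentIn hq

theorem mem_connectedComponentIn_iff_hasContLog (hK : IsCompact K) {p q : ℂ∞}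
    (hp : p ∉ ((↑) '' K : Set ℂ∞)) (hq : q ∉ ((↑) '' K : Set ℂ∞)) :
    q ∈ connectedComponentIn ((↑) '' K)ᶜ p ↔ HasContLog K fun z => sphereSub p z / sphereSub q z :=
  ⟨hasContLog_of_mem_connectedComponentIn hK,
    mem_connectedComponentIn_of_hasContLog hK.isClosed hp hq⟩

end Criterion

namespace OnePoint

variable {𝕜 : Type*} [NormedField 𝕜]

open Classical in
noncomputable def inversion (p : OnePoint 𝕜) : OnePoint 𝕜 :=
  p.elim (0 : 𝕜) fun z => if z = 0 then ∞ else ↑z⁻¹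

@[simp] lemma inversion_infty : inversion (∞ : OnePoint 𝕜) = (0 : 𝕜) := rfl

@[simp] lemma inversion_coe_zero : inversion ((0 : 𝕜) : OnePoint 𝕜) = ∞ := by
  simp [inversion]

lemma inversion_coe {z : 𝕜} (hz : z ≠ 0) : inversion (z : OnePoint 𝕜) = ↑z⁻¹ := by
  simp [inversion, hz]

lemma involutive_inversion : Function.Involutive (inversion : OnePoint 𝕜 → OnePoint 𝕜) := by
  intro p
  induction p using OnePoint.rec with
  | infty => simp
  | coe z =>
    rcases eq_or_ne z 0 with rfl | hz
    · simp
    · rw [inversion_coe hz, inversion_coe (inv_ne_zero hz), inv_inv]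

lemma continuous_inversion [ProperSpace 𝕜] : Continuous (inversion : OnePoint 𝕜 → OnePoint 𝕜) := by
  rw [continuous_iff, coclosedCompact_eq_cocompact, ← cobounded_eq_cocompact]
  refine ⟨?_, continuous_iff_continuousAt.2 fun z => ?_⟩
  · refine ((continuous_coe.tendsto (0 : 𝕜)).comp tendsto_inv₀_cobounded).congr' ?_
    filter_upwards [eventually_ne_cobounded 0] with z hz
    exact (inversion_coe hz).symm
  rcases eq_or_ne z 0 with rfl | hz
  · rw [← continuousWithinAt_compl_self, ContinuousWithinAt, inversion_coe_zero]
    have hcoe := tendsto_coe_infty (X := 𝕜)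
    rw [coclosedCompact_eq_cocompact, ← cobounded_eq_cocompact] at hcoe
    refine (hcoe.comp tendsto_inv₀_nhdsNE_zero).congr' ?_
    filter_upwards [self_mem_nhdsWithin] with w hw
    exact (inversion_coe hw).symm
  · refine (continuous_coe.continuousAt.comp (continuousAt_inv₀ hz)).congr ?_
    filter_upwards [isOpen_ne.mem_nhds hz] with w hw
    exact (inversion_coe hw).symm

lemma exists_homeomorph_apply_eq_infty [ProperSpace 𝕜] (p : OnePoint 𝕜) :
    ∃ m : OnePoint 𝕜 ≃ₜ OnePoint 𝕜, m p = ∞ := by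
  induction p using OnePoint.rec with
  | infty => exact ⟨.refl _, rfl⟩
  | coe c =>
    let ι : OnePoint 𝕜 ≃ₜ OnePoint 𝕜 :=
      continuous_inversion.homeoOfEquivCompactToT2 (f := involutive_inversion.toPerm _)
    refine ⟨(Homeomorph.subRight c).onePointCongr.trans ι, ?_⟩
    have hc : (Homeomorph.subRight c).onePointCongr (c : OnePoint 𝕜) = ((0 : 𝕜) : OnePoint 𝕜) := by
      simp [Homeomorph.onePointCongr]
    rw [Homeomorph.trans_apply, hc]
    exact inversion_coe_zero

end OnePoint

theorem mem_connectedComponentIn_compl_union_of_infty_notMem {X Y : Set ℂ∞} (hX : IsClosed X)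
    (hY : IsClosed Y) (hXY : Disjoint X Y) (hX_infty : ∞ ∉ X) (hY_infty : ∞ ∉ Y) {x y : ℂ∞}
    (hx : x ∉ X ∪ Y) (hy : y ∉ X ∪ Y) (h1 : y ∈ connectedComponentIn Xᶜ x)
    (h2 : y ∈ connectedComponentIn Yᶜ x) : y ∈ connectedComponentIn (X ∪ Y)ᶜ x := by
  obtain ⟨X₀, hX₀, rfl⟩ := exists_isCompact_image_coe_eq hX hX_infty
  obtain ⟨Y₀, hY₀, rfl⟩ := exists_isCompact_image_coe_eq hY hY_infty
  rw [mem_connectedComponentIn_iff_hasContLog hX₀ (not_or.mp hx).1 (not_or.mp hy).1] at h1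
  rw [mem_connectedComponentIn_iff_hasContLog hY₀ (not_or.mp hx).2 (not_or.mp hy).2] at h2
  rw [← image_union] at hx hy ⊢
  rw [mem_connectedComponentIn_iff_hasContLog (hX₀.union hY₀) hx hy]
  exact h1.union hX₀.isClosed hY₀.isClosed ((disjoint_image_iff coe_injective).mp hXY) h2

/-- Lemma (Closed Sets Topological Lemma): for disjoint closed sets `X, Y` in the Riemann
sphere and points `x, y` outside `X ∪ Y`, if `x` and `y` are in the same component of `Xᶜ`
and the same component of `Yᶜ`, then they are in the same component of `(X ∪ Y)ᶜ`. -/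
theorem stmt0 (X Y : Set (OnePoint ℂ)) (hX : IsClosed X) (hY : IsClosed Y)
    (hXY : Disjoint X Y) (x y : OnePoint ℂ) (hx : x ∉ X ∪ Y) (hy : y ∉ X ∪ Y)
    (h1 : y ∈ connectedComponentIn Xᶜ x) (h2 : y ∈ connectedComponentIn Yᶜ x) :
    y ∈ connectedComponentIn (X ∪ Y)ᶜ x := by
  obtain ⟨m, hm⟩ := exists_homeomorph_apply_eq_infty x
  have hxX : x ∈ Xᶜ := fun h => hx (Or.inl h)
  have hxY : x ∈ Yᶜ := fun h => hx (Or.inr h)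
  have h_infty {S : Set (OnePoint ℂ)} (hxS : x ∉ S) : ∞ ∉ m '' S :=
    hm ▸ fun h => hxS (m.injective.mem_set_image.mp h)
  have h_image {z : OnePoint ℂ} (hz : z ∉ X ∪ Y) : m z ∉ m '' X ∪ m '' Y := by
    rwa [← image_union, m.injective.mem_set_image]
  rw [← m.apply_mem_connectedComponentIn_image_iff hxX, m.image_compl] at h1
  rw [← m.apply_mem_connectedComponentIn_image_iff hxY, m.image_compl] at h2
  rw [← m.apply_mem_connectedComponentIn_image_iff hx, m.image_compl, image_union]
  exact mem_connectedComponentIn_compl_union_of_infty_notMem (m.isClosed_image.2 hX)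
    (m.isClosed_image.2 hY) ((disjoint_image_iff m.injective).mpr hXY) (h_infty hxX)
    (h_infty hxY) (h_image hx) (h_image hy) h1 h2
end

section
/- Let A ⊆ ℂ be open and connected, and let X ⊆ A be a compact set whose complement ℂ \ X is connected. Then A \ X is connected. -/
/-!
This is the unicoherence of the plane. If `A \ X` split into disjoint open sets `G` and
`(A \ X) \ G`, a Urysohn function `φ` (`0` off `A`, `1` on `X`) gives the circle-valued map
`↑(G.indicator φ) : ℂ → ℝ/ℤ`, continuous because `φ` is `0` or `1` on the frontier of
`G`. As `ℂ` is simply connected it lifts to a real function `F`. On the connected set `Xᶜ` the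
function `G.indicator φ` is itself continuous, and on the connected set `A` so is
`G.indicator (φ - 1)`; both differ from `F` by integers, hence by constants. Subtracting,
the indicator of `G` is constant on `A \ X`, a contradiction.
-/

open Set

variable {Y : Type*} [TopologicalSpace Y]

theorem ContinuousOn.indicator {M : Type*} [TopologicalSpace M] [Zero M] {f : Y → M}
    {s t : Set Y} (hf : ContinuousOn f s) (hft : ∀ y ∈ s ∩ frontier t, f y = 0) :
    ContinuousOn (t.indicator f) s := by
  classical
  rw [← piecewise_eq_indicator]
  exact ContinuousOn.piecewise hft (hf.mono inter_subset_left) continuousOn_const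

theorem frontier_subset_compl_of_isOpen_diff {G W : Set Y} (hG : IsOpen G)
    (hWG : IsOpen (W \ G)) : frontier G ⊆ Wᶜ := by
  intro y hy hyW
  rw [hG.frontier_eq] at hy
  obtain ⟨z, ⟨-, hzG⟩, hz⟩ := mem_closure_iff.mp hy.1 (W \ G) hWG ⟨hyW, hy.2⟩
  exact hzG hz

theorem exists_continuous_lift_addCircle [SimplyConnectedSpace Y] [LocallyPathConnectedSpace Y]
    {p : ℝ} {f : Y → AddCircle p} (hf : Continuous f) :
    ∃ F : Y → ℝ, Continuous F ∧ ∀ y, (F y : AddCircle p) = f y := by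
  obtain ⟨y₀⟩ : Nonempty Y := PathConnectedSpace.nonempty
  obtain ⟨e₀, he₀⟩ := QuotientAddGroup.mk_surjective (f y₀)
  obtain ⟨F, ⟨-, hF⟩, -⟩ :=
    (AddCircle.isCoveringMap_coe p).existsUnique_continuousMap_lifts ⟨f, hf⟩ y₀ e₀ he₀
  exact ⟨F, F.continuous, congrFun hF⟩

theorem IsPreconnected.sub_eq_sub_of_coe_eq {p : ℝ} {S : Set Y} (hS : IsPreconnected S)
    {u v : Y → ℝ} (hu : ContinuousOn u S) (hv : ContinuousOn v S)
    (huv : ∀ y ∈ S, (u y : AddCircle p) = v y) {x y : Y} (hx : x ∈ S) (hy : y ∈ S) :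
    u x - v x = u y - v y :=
  hS.constant_of_mapsTo (T := AddSubgroup.zmultiples p)
    (isDiscrete_iff_discreteTopology.mpr
      (inferInstanceAs (DiscreteTopology (AddSubgroup.zmultiples p)))) (hu.sub hv)
    (fun z hz => QuotientAddGroup.eq_iff_sub_mem.mp (huv z hz)) hx hy

theorem inter_subset_of_isOpen_diff_of_union_eq_univ [NormalSpace Y] [SimplyConnectedSpace Y]
    [LocallyPathConnectedSpace Y] {U V G : Set Y} (hU : IsOpen U) (hV : IsOpen V)
    (hUc : IsPreconnected U) (hVc : IsPreconnected V) (hUV : U ∪ V = univ) (hG : IsOpen G)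
    (hUVG : IsOpen ((U ∩ V) \ G)) {x : Y} (hxG : x ∈ G) (hxUV : x ∈ U ∩ V) :
    U ∩ V ⊆ G := by
  intro y hyUV
  by_contra hyG
  have hfrontier : frontier G ⊆ Uᶜ ∪ Vᶜ :=
    compl_inter U V ▸ frontier_subset_compl_of_isOpen_diff hG hUVG
  obtain ⟨φ, hφU, hφV, -⟩ := exists_continuous_zero_one_of_isClosed hU.isClosed_compl
    hV.isClosed_compl <| by
      rw [disjoint_compl_left_iff_subset, compl_subset_iff_union, union_comm, hUV]
  have hφ : ∀ z ∈ frontier G, (φ z : AddCircle (1 : ℝ)) = 0 := by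
    intro z hz
    rcases hfrontier hz with hzU | hzV
    · rw [hφU hzU, Pi.zero_apply, QuotientAddGroup.mk_zero]
    · rw [hφV hzV, Pi.one_apply, AddCircle.coe_period]
  have hcirc : Continuous fun z => ((G.indicator φ z : ℝ) : AddCircle (1 : ℝ)) := by
    rw [← Function.comp_def, ← indicator_comp_of_zero (QuotientAddGroup.mk_zero _)]
    exact continuous_indicator hφ (continuous_quotient_mk'.comp φ.continuous).continuousOn
  obtain ⟨F, hF, hFφ⟩ := exists_continuous_lift_addCircle hcirc
  have hV' : ContinuousOn (G.indicator φ) V := φ.continuous.continuousOn.indicator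
    fun z ⟨hzV, hz⟩ => hφU ((hfrontier hz).resolve_right (not_not_intro hzV))
  have hU' : ContinuousOn (G.indicator fun z => φ z - 1) U :=
    (φ.continuous.sub continuous_const).continuousOn.indicator fun z ⟨hzU, hz⟩ => by
      rw [Pi.sub_apply, hφV ((hfrontier hz).resolve_left (not_not_intro hzU)), Pi.one_apply,
        sub_self]
  have hFV := hVc.sub_eq_sub_of_coe_eq hF.continuousOn hV' (fun z _ => hFφ z) hxUV.2 hyUV.2
  have hFU := hUc.sub_eq_sub_of_coe_eq hF.continuousOn hU' (fun z _ => by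
    rw [hFφ, indicator_sub, QuotientAddGroup.mk_sub]
    by_cases hz : z ∈ G <;> simp [hz, AddCircle.coe_period]) hxUV.1 hyUV.1
  simp only [indicator_of_mem hxG, indicator_of_notMem hyG] at hFV hFU
  linarith

theorem IsPreconnected.inter_of_union_eq_univ [NormalSpace Y] [SimplyConnectedSpace Y]
    [LocallyPathConnectedSpace Y] {U V : Set Y} (hU : IsOpen U) (hV : IsOpen V)
    (hUc : IsPreconnected U) (hVc : IsPreconnected V) (hUV : U ∪ V = univ) :
    IsPreconnected (U ∩ V) := by
  rintro u v hu hv hcover ⟨x, hxUV, hxu⟩ ⟨y, hyUV, hyv⟩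
  by_contra! huv
  have hUVu : (U ∩ V) \ u = U ∩ V ∩ v := by
    ext z
    constructor
    · rintro ⟨hz, hzu⟩
      exact ⟨hz, (hcover hz).resolve_left hzu⟩
    · rintro ⟨hz, hzv⟩
      exact ⟨hz, fun hzu => huv.subset ⟨hz, hzu, hzv⟩⟩
  have hyu := inter_subset_of_isOpen_diff_of_union_eq_univ hU hV hUc hVc hUV hu
    (hUVu ▸ (hU.inter hV).inter hv) hxu hxUV hyUV
  exact huv.subset ⟨hyUV, hyu, hyv⟩

theorem IsConnected.inter_of_union_eq_univ [NormalSpace Y] [SimplyConnectedSpace Y]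
    [LocallyPathConnectedSpace Y] {U V : Set Y} (hU : IsOpen U) (hV : IsOpen V)
    (hUc : IsConnected U) (hVc : IsConnected V) (hUV : U ∪ V = univ) :
    IsConnected (U ∩ V) := by
  refine ⟨?_, hUc.isPreconnected.inter_of_union_eq_univ hU hV hVc.isPreconnected hUV⟩
  simpa using isPreconnected_univ U V hU hV hUV.ge (by simpa using hUc.nonempty)
    (by simpa using hVc.nonempty)

/-- If `A ⊆ ℂ` is open and connected and `X ⊆ A` is compact with connected complement,
then `A \ X` is connected. -/
theorem stmt1 (A X : Set ℂ) (hA : IsOpen A) (hAc : IsConnected A) (hXA : X ⊆ A)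
    (hX : IsCompact X) (hXc : IsConnected Xᶜ) : IsConnected (A \ X) := by
  rw [sdiff_eq]
  refine hAc.inter_of_union_eq_univ hA hX.isClosed.isOpen_compl hXc ?_
  rw [← compl_subset_iff_union]
  exact compl_subset_compl.mpr hXA
end

section
/- The critical points of a nonconstant complex polynomial lie in the convex hull of its roots (Gauss–Lucas theorem). -/
/-!
If a critical point `z` is not itself a root, then `p'(z)/p(z) = ∑ 1/(z - r) = 0`, the sum running
over the roots with multiplicity. Conjugating gives `∑ (z - r)/|z - r|² = 0`, which exhibits `z` as
the barycentre of the roots with the positive weights `|z - r|⁻²`.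
-/

open Polynomial ComplexConjugate

theorem Polynomial.Splits.sum_inv_sub_roots_eq_zero {K : Type*} [Field K] {p : K[X]}
    (hp : p.Splits) {z : K} (hz : p.eval z ≠ 0) (hz' : p.derivative.eval z = 0) :
    (p.roots.map fun r => (z - r)⁻¹).sum = 0 := by
  simpa [hz', hz] using (hp.eval_derivative_eq_eval_mul_sum hz).symm

theorem mem_convexHull_of_sum_smul_sub_eq_zero {ι E : Type*} [AddCommGroup E] [Module ℝ E]
    (t : Finset ι) (w : ι → ℝ) (x : ι → E) {z : E} (hw₀ : ∀ i ∈ t, 0 ≤ w i)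
    (hw : 0 < ∑ i ∈ t, w i) (h : ∑ i ∈ t, w i • (z - x i) = 0) :
    z ∈ convexHull ℝ (x '' t) := by
  have hz : t.centerMass w x = z := by
    simp only [smul_sub, Finset.sum_sub_distrib, ← Finset.sum_smul, sub_eq_zero] at h
    rw [Finset.centerMass, ← h, smul_smul, inv_mul_cancel₀ hw.ne', one_smul]
  exact hz ▸ t.centerMass_mem_convexHull hw₀ hw fun i hi => Set.mem_image_of_mem x hi

theorem Complex.conj_inv_eq_inv_normSq_smul (w : ℂ) : conj w⁻¹ = (normSq w)⁻¹ • w := by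
  rw [inv_def, map_mul, conj_conj, conj_ofReal, real_smul, mul_comm]

theorem Complex.mem_convexHull_of_sum_inv_sub_eq_zero {R : Multiset ℂ} (hR : R ≠ 0) {z : ℂ}
    (hz : z ∉ R) (h : (R.map fun r => (z - r)⁻¹).sum = 0) :
    z ∈ convexHull ℝ {r | r ∈ R} := by
  have hw : ∀ r : R, 0 < (normSq (z - r))⁻¹ := fun r =>
    inv_pos.2 (normSq_pos.2 fun hr => hz (sub_eq_zero.1 hr ▸ Multiset.coe_mem))
  have hsum : ∑ r : R, (normSq (z - r))⁻¹ • (z - r) = 0 := by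
    have := congrArg conj h
    rw [map_multiset_sum, Multiset.map_map, map_zero, ← Multiset.map_univ,
      ← Finset.sum_eq_multiset_sum] at this
    simpa only [Function.comp_apply, conj_inv_eq_inv_normSq_smul] using this
  have hpos : 0 < ∑ r : R, (normSq (z - r))⁻¹ := by
    obtain ⟨r, hr⟩ := Multiset.exists_mem_of_ne_zero hR
    exact Finset.sum_pos (fun r _ => hw r) ⟨⟨r, 0, Multiset.count_pos.2 hr⟩, Finset.mem_univ _⟩
  refine convexHull_mono ?_
    (mem_convexHull_of_sum_smul_sub_eq_zero _ _ _ (fun r _ => (hw r).le) hpos hsum)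
  rintro _ ⟨r, -, rfl⟩
  exact Multiset.coe_mem

/-- Gauss–Lucas theorem: the critical points of a nonconstant complex polynomial lie in
the convex hull of its roots. -/
theorem stmt8 (p : Polynomial ℂ) (hp : 0 < p.natDegree) (z : ℂ)
    (hz : (Polynomial.derivative p).eval z = 0) :
    z ∈ convexHull ℝ {w : ℂ | p.IsRoot w} := by
  by_cases hpz : p.IsRoot z
  · exact subset_convexHull ℝ _ hpz
  have hsplit := IsAlgClosed.splits p
  have hp0 : p ≠ 0 := ne_zero_of_natDegree_gt hp
  have hroots : p.roots ≠ 0 := by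
    rw [← Multiset.card_pos, ← hsplit.natDegree_eq_card_roots]
    exact hp
  refine convexHull_mono (fun r hr => (mem_roots hp0).1 hr) ?_
  exact Complex.mem_convexHull_of_sum_inv_sub_eq_zero hroots
    (fun h => hpz ((mem_roots hp0).1 h)) (hsplit.sum_inv_sub_roots_eq_zero hpz hz)
end

section
/- Let f be a nonconstant holomorphic function on an open set containing the closure of a bounded open connected set G ⊆ ℂ. For any ε > 0, the level set {z ∈ G : |f(z)| = ε} has finitely many connected components whose closure is contained in G, provided no component of the level set meets ∂G. -/
/-! Near a point `z₀` of the level set write `f z / f z₀ = exp (h z)` with `h` holomorphic and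
`h z₀ = 0`; the level set is then `{Re h = 0}`. Either `h` vanishes near `z₀`, or `h = φ ^ n` for a
local biholomorphism `φ` with `φ z₀ = 0`, and the level set is locally the image under `φ⁻¹` of the
star-shaped set `{w | Re (w ^ n) = 0}` in a small disc. So every point of the level set has a
neighbourhood in which the level set is preconnected. The level set is compact since its closure
stays in `G`; finitely many such neighbourhoods cover it, and every component contains one of their
centres. -/

open Set Metric Filter Topology

theorem StarConvex.isPreconnected {E : Type*} [AddCommGroup E] [Module ℝ E] [TopologicalSpace E]
    [IsTopologicalAddGroup E] [ContinuousSMul ℝ E] {s : Set E} {a : E} (h : StarConvex ℝ a s) :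
    IsPreconnected s :=
  s.eq_empty_or_nonempty.elim (fun hs => hs ▸ isPreconnected_empty)
    fun hs => (h.isPathConnected (h.mem hs)).isConnected.isPreconnected

theorem IsCompact.finite_connectedComponentIn {X : Type*} [TopologicalSpace X] {S : Set X}
    (hS : IsCompact S) (hloc : ∀ x ∈ S, ∃ N ∈ 𝓝 x, IsPreconnected (S ∩ N)) :
    {C : Set X | ∃ x ∈ S, C = connectedComponentIn S x}.Finite := by
  choose! N hN hNc using hloc
  obtain ⟨t, htS, hcover⟩ := hS.elim_nhds_subcover N hN
  refine (t.finite_toSet.image (connectedComponentIn S)).subset ?_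
  rintro _ ⟨x, hx, rfl⟩
  obtain ⟨y, hy, hxy⟩ := mem_iUnion₂.1 (hcover hx)
  have hyS := htS y hy
  have hN_sub : S ∩ N y ⊆ connectedComponentIn S x :=
    (hNc y hyS).subset_connectedComponentIn ⟨hx, hxy⟩ inter_subset_left
  exact ⟨y, hy, (connectedComponentIn_eq (hN_sub ⟨hyS, mem_of_mem_nhds (hN y hyS)⟩)).symm⟩

theorem Complex.isPreconnected_ball_inter_re_pow_eq_zero (n : ℕ) (ρ : ℝ) :
    IsPreconnected (ball (0 : ℂ) ρ ∩ {w | (w ^ n).re = 0}) := by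
  refine StarConvex.isPreconnected (balanced_ball_zero.starConvex.inter ?_)
  refine starConvex_zero_iff.2 fun w (hw : (w ^ n).re = 0) a _ _ => ?_
  change ((a • w) ^ n).re = 0
  rw [Complex.real_smul, mul_pow, ← Complex.ofReal_pow, Complex.re_ofReal_mul, hw, mul_zero]

theorem Complex.log_div_re_eq_zero_iff {a b : ℂ} (ha : a ≠ 0) (hb : b ≠ 0) :
    (Complex.log (a / b)).re = 0 ↔ ‖a‖ = ‖b‖ := by
  rw [Complex.log_re, norm_div, Real.log_eq_zero, div_eq_one_iff_eq (norm_ne_zero_iff.2 hb)]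
  have hpos : 0 < ‖a‖ / ‖b‖ := by positivity
  constructor
  · rintro (h | h | h)
    · exact absurd h hpos.ne'
    · exact h
    · linarith
  · exact fun h => Or.inr (Or.inl h)

theorem AnalyticAt.exists_pow_eq {u : ℂ → ℂ} {z₀ : ℂ} (hu : AnalyticAt ℂ u z₀) (hu0 : u z₀ ≠ 0)
    {n : ℕ} (hn : n ≠ 0) : ∃ v : ℂ → ℂ, AnalyticAt ℂ v z₀ ∧ ∀ z, v z ^ n = u z := by
  obtain ⟨d, hd⟩ := IsAlgClosed.exists_pow_nat_eq (u z₀) (Nat.pos_of_ne_zero hn)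
  refine ⟨fun z => d * (u z / u z₀) ^ (n⁻¹ : ℂ), ?_, fun z => ?_⟩
  · exact analyticAt_const.mul ((hu.div analyticAt_const hu0).cpow analyticAt_const
      (by simp [div_self hu0]))
  · rw [mul_pow, Complex.cpow_nat_inv_pow _ hn, hd, mul_div_cancel₀ _ hu0]

theorem AnalyticAt.exists_openPartialHomeomorph_pow_eq {h : ℂ → ℂ} {z₀ : ℂ} {n : ℕ}
    (hh : AnalyticAt ℂ h z₀) (hn : analyticOrderAt h z₀ = n) (hn0 : n ≠ 0) :
    ∃ Φ : OpenPartialHomeomorph ℂ ℂ, z₀ ∈ Φ.source ∧ Φ z₀ = 0 ∧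
      ∀ᶠ z in 𝓝 z₀, h z = Φ z ^ n := by
  obtain ⟨u, hu, hu0, hhu⟩ := hh.analyticOrderAt_eq_natCast.1 hn
  obtain ⟨v, hv, hvu⟩ := hu.exists_pow_eq hu0 hn0
  have hv0 : v z₀ ≠ 0 := fun h0 => hu0 (by rw [← hvu, h0, zero_pow hn0])
  have hderiv : HasStrictDerivAt (fun z => (z - z₀) * v z) (v z₀) z₀ := by
    have hsub : HasStrictDerivAt (fun z : ℂ => z - z₀) 1 z₀ := (hasStrictDerivAt_id z₀).sub_const z₀
    convert! hsub.mul hv.hasStrictDerivAt using 1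
    simp
  have hequiv := hderiv.hasStrictFDerivAt_equiv hv0
  refine ⟨hequiv.toOpenPartialHomeomorph _, hequiv.mem_toOpenPartialHomeomorph_source,
    by simp [hequiv.toOpenPartialHomeomorph_coe], ?_⟩
  filter_upwards [hhu] with z hz
  rw [hequiv.toOpenPartialHomeomorph_coe, hz, smul_eq_mul, mul_pow, hvu]

theorem OpenPartialHomeomorph.exists_mem_nhds_isPreconnected_re_pow_eq_zero
    (Φ : OpenPartialHomeomorph ℂ ℂ) {h : ℂ → ℂ} {z₀ : ℂ} {n : ℕ}
    (hz₀ : z₀ ∈ Φ.source) (hΦz₀ : Φ z₀ = 0) (hh : ∀ᶠ z in 𝓝 z₀, h z = Φ z ^ n)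
    {V : Set ℂ} (hV : V ∈ 𝓝 z₀) :
    ∃ N ∈ 𝓝 z₀, N ⊆ V ∧ IsPreconnected ({z | (h z).re = 0} ∩ N) := by
  have h0 : (0 : ℂ) ∈ Φ.target := hΦz₀ ▸ Φ.map_source hz₀
  have hsymm0 : Φ.symm 0 = z₀ := hΦz₀ ▸ Φ.left_inv hz₀
  have hev : ∀ᶠ w in 𝓝 (0 : ℂ), w ∈ Φ.target ∧ Φ.symm w ∈ V ∧ h (Φ.symm w) = w ^ n := by
    filter_upwards [Φ.open_target.mem_nhds h0,
      (hΦz₀ ▸ Φ.tendsto_symm hz₀).eventually (inter_mem hV hh)] with w hw ⟨hwV, hwh⟩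
    exact ⟨hw, hwV, by rw [hwh, Φ.right_inv hw]⟩
  obtain ⟨ρ, hρ, hball⟩ := Metric.eventually_nhds_iff_ball.1 hev
  refine ⟨Φ.symm '' ball 0 ρ, hsymm0 ▸ Φ.symm.image_mem_nhds h0 (ball_mem_nhds 0 hρ),
    image_subset_iff.2 fun w hw => (hball w hw).2.1, ?_⟩
  have hpre : ball 0 ρ ∩ Φ.symm ⁻¹' {z | (h z).re = 0} = ball 0 ρ ∩ {w | (w ^ n).re = 0} := by
    ext w
    simp only [mem_inter_iff, mem_preimage, mem_ofPred_eq, and_congr_right_iff]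
    intro hw
    rw [(hball w hw).2.2]
  rw [inter_comm, ← image_inter_preimage, hpre]
  exact (Complex.isPreconnected_ball_inter_re_pow_eq_zero n ρ).image _
    (Φ.continuousOn_symm.mono fun w hw => (hball w hw.1).1)

theorem AnalyticAt.exists_mem_nhds_isPreconnected_re_eq_zero {h : ℂ → ℂ} {z₀ : ℂ}
    (hh : AnalyticAt ℂ h z₀) (h0 : h z₀ = 0) {V : Set ℂ} (hV : V ∈ 𝓝 z₀) :
    ∃ N ∈ 𝓝 z₀, N ⊆ V ∧ IsPreconnected ({z | (h z).re = 0} ∩ N) := by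
  cases hn : analyticOrderAt h z₀ with
  | top =>
    obtain ⟨r, hr, hsub⟩ := Metric.mem_nhds_iff.1 (inter_mem hV (analyticOrderAt_eq_top.1 hn))
    refine ⟨ball z₀ r, ball_mem_nhds z₀ hr, fun z hz => (hsub hz).1, ?_⟩
    rw [inter_eq_right.2 fun z hz => by simp [show h z = 0 from (hsub hz).2]]
    exact (convex_ball z₀ r).isPreconnected
  | coe n =>
    have hn0 : n ≠ 0 := by
      rintro rfl
      exact (hh.analyticOrderAt_eq_zero.1 hn) h0
    obtain ⟨Φ, hz₀, hΦz₀, hΦ⟩ := hh.exists_openPartialHomeomorph_pow_eq hn hn0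
    exact Φ.exists_mem_nhds_isPreconnected_re_pow_eq_zero hz₀ hΦz₀ hΦ hV

theorem AnalyticAt.exists_mem_nhds_isPreconnected_norm_eq {f : ℂ → ℂ} {z₀ : ℂ}
    (hf : AnalyticAt ℂ f z₀) (hf0 : f z₀ ≠ 0) {V : Set ℂ} (hV : V ∈ 𝓝 z₀) :
    ∃ N ∈ 𝓝 z₀, N ⊆ V ∧ IsPreconnected ({z | ‖f z‖ = ‖f z₀‖} ∩ N) := by
  have hlog : AnalyticAt ℂ (fun z => Complex.log (f z / f z₀)) z₀ :=
    (hf.div analyticAt_const hf0).clog (by simp [div_self hf0])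
  obtain ⟨N, hN, hNV, hNc⟩ := hlog.exists_mem_nhds_isPreconnected_re_eq_zero
    (by simp [div_self hf0]) (inter_mem hV (hf.continuousAt.eventually_ne hf0))
  refine ⟨N, hN, fun z hz => (hNV hz).1, ?_⟩
  convert hNc using 1
  ext z
  simp only [mem_inter_iff, mem_ofPred_eq, and_congr_left_iff]
  exact fun hz => (Complex.log_div_re_eq_zero_iff (hNV hz).2 hf0).symm

theorem stmt9_general (G U : Set ℂ) (hG : IsOpen G)
    (hGb : Bornology.IsBounded G) (hU : IsOpen U) (hUG : closure G ⊆ U)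
    (f : ℂ → ℂ) (hf : DifferentiableOn ℂ f U)
    (ε : ℝ) (hε : 0 < ε)
    (hsep : closure {z ∈ G | ‖f z‖ = ε} ⊆ G) :
    {C : Set ℂ | ∃ z ∈ {z ∈ G | ‖f z‖ = ε},
      C = connectedComponentIn {z ∈ G | ‖f z‖ = ε} z}.Finite := by
  set E := {z ∈ G | ‖f z‖ = ε}
  have hGU : G ⊆ U := subset_closure.trans hUG
  have hE_eq : E = closure E ∩ (fun z => ‖f z‖) ⁻¹' {ε} :=
    Subset.antisymm (fun z hz => ⟨subset_closure hz, hz.2⟩) fun z hz => ⟨hsep hz.1, hz.2⟩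
  have hE_closed : IsClosed E := by
    rw [hE_eq]
    exact (hf.continuousOn.norm.mono (hsep.trans hGU)).preimage_isClosed_of_isClosed
      isClosed_closure isClosed_singleton
  refine (isCompact_of_isClosed_isBounded hE_closed (hGb.subset (sep_subset _ _)))
    |>.finite_connectedComponentIn fun z hz => ?_
  have hfz : f z ≠ 0 := norm_ne_zero_iff.1 (hz.2 ▸ hε.ne')
  obtain ⟨N, hN, hNG, hNc⟩ := (hf.analyticAt (hU.mem_nhds (hGU hz.1)))
    |>.exists_mem_nhds_isPreconnected_norm_eq hfz (hG.mem_nhds hz.1)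
  refine ⟨N, hN, ?_⟩
  convert hNc using 1
  ext w
  simp only [E, mem_inter_iff, mem_ofPred_eq, hz.2]
  exact ⟨fun ⟨⟨_, hw⟩, hwN⟩ => ⟨hw, hwN⟩, fun ⟨hw, hwN⟩ => ⟨⟨hNG hwN, hw⟩, hwN⟩⟩

/-- If `G ⊆ ℂ` is bounded, open and connected, `f` is holomorphic and nonconstant on an
open set containing `cl G`, `ε > 0`, and the level set `E = {z ∈ G | |f z| = ε}` satisfies
`cl E ⊆ G` (no component of it meets `∂G`), then `E` has finitely many connected
components. -/
theorem stmt9 (G U : Set ℂ) (hG : IsOpen G) (hGc : IsConnected G)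
    (hGb : Bornology.IsBounded G) (hU : IsOpen U) (hUG : closure G ⊆ U)
    (f : ℂ → ℂ) (hf : DifferentiableOn ℂ f U) (hnc : ¬ ∃ c : ℂ, ∀ z ∈ U, f z = c)
    (ε : ℝ) (hε : 0 < ε)
    (hsep : closure {z ∈ G | ‖f z‖ = ε} ⊆ G) :
    {C : Set ℂ | ∃ z ∈ {z ∈ G | ‖f z‖ = ε},
      C = connectedComponentIn {z ∈ G | ‖f z‖ = ε} z}.Finite :=
  stmt9_general G U hG hGb hU hUG f hf ε hε hsep
end

section
/- Let p(z) = z^n − 1 for n ≥ 2 and let ε ∈ (1, ∞). Then the level set {z ∈ ℂ : |z^n − 1| = ε} is connected. -/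
/-!
For `ε > 1` the circle `|w - 1| = ε` surrounds `0`, so it meets every ray from `0` exactly once,
at distance `ρ(t) = cos t + √(cos² t + ε² - 1)` in direction `t`. Taking `n`-th roots, the level set
is exactly the image of the continuous map `θ ↦ ρ(nθ)^(1/n) e^{iθ}` on `ℝ`, hence connected.
-/

open Complex Metric Set

namespace Complex

theorem ofReal_mul_exp_mul_I_pow (r t : ℝ) (n : ℕ) :
    ((r : ℂ) * exp (t * I)) ^ n = ((r ^ n : ℝ) : ℂ) * exp ((n * t : ℝ) * I) := by
  rw [mul_pow, ← exp_nat_mul]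
  push_cast
  ring_nf

theorem norm_ofReal_mul_exp_mul_I_sub_one_sq (r t : ℝ) :
    ‖(r : ℂ) * exp (t * I) - 1‖ ^ 2 = r ^ 2 - 2 * r * Real.cos t + 1 := by
  rw [Complex.sq_norm, normSq_apply]
  simp only [sub_re, sub_im, re_ofReal_mul, im_ofReal_mul, exp_ofReal_mul_I_re,
    exp_ofReal_mul_I_im, one_re, one_im]
  linear_combination r ^ 2 * Real.sin_sq_add_cos_sq t

theorem preimage_pow_eq_range_of_radial {S : Set ℂ} {ρ : ℝ → ℝ} {n : ℕ} (hn : n ≠ 0)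
    (hρ : ∀ t, 0 < ρ t) (hS₀ : (0 : ℂ) ∉ S)
    (hS : ∀ r t : ℝ, 0 < r → ((r : ℂ) * exp (t * I) ∈ S ↔ r = ρ t)) :
    (· ^ n) ⁻¹' S = range fun θ : ℝ ↦ ((ρ (n * θ) ^ (n⁻¹ : ℝ) : ℝ) : ℂ) * exp (θ * I) := by
  ext z
  simp only [mem_preimage, mem_range]
  constructor
  · intro hz
    have hz₀ : z ≠ 0 := by
      rintro rfl
      exact hS₀ (by rwa [zero_pow hn] at hz)
    have hnorm : 0 < ‖z‖ := norm_pos_iff.mpr hz₀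
    rw [← norm_mul_exp_arg_mul_I z, ofReal_mul_exp_mul_I_pow, hS _ _ (pow_pos hnorm n)] at hz
    refine ⟨arg z, ?_⟩
    rw [← hz, Real.pow_rpow_inv_natCast hnorm.le hn, norm_mul_exp_arg_mul_I]
  · rintro ⟨θ, rfl⟩
    rw [ofReal_mul_exp_mul_I_pow, hS _ _ (pow_pos (Real.rpow_pos_of_pos (hρ _) _) n)]
    exact Real.rpow_inv_natCast_pow (hρ _).le hn

theorem isConnected_preimage_pow_of_radial {S : Set ℂ} {ρ : ℝ → ℝ} {n : ℕ} (hn : n ≠ 0)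
    (hρc : Continuous ρ) (hρ : ∀ t, 0 < ρ t) (hS₀ : (0 : ℂ) ∉ S)
    (hS : ∀ r t : ℝ, 0 < r → ((r : ℂ) * exp (t * I) ∈ S ↔ r = ρ t)) :
    IsConnected ((· ^ n) ⁻¹' S) := by
  rw [preimage_pow_eq_range_of_radial hn hρ hS₀ hS]
  exact isConnected_range (by fun_prop (disch := positivity))

end Complex

/-- The positive root of `r ^ 2 - 2 r cos t + 1 = ε ^ 2 = ‖r e^{it} - 1‖ ^ 2`. -/
noncomputable def radiusSphereOne (ε t : ℝ) : ℝ :=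
  Real.cos t + √(Real.cos t ^ 2 + (ε ^ 2 - 1))

theorem continuous_radiusSphereOne (ε : ℝ) : Continuous (radiusSphereOne ε) := by
  unfold radiusSphereOne
  fun_prop

theorem radiusSphereOne_pos {ε : ℝ} (hε : 1 < ε) (t : ℝ) : 0 < radiusSphereOne ε t := by
  set c := Real.cos t
  set s := √(c ^ 2 + (ε ^ 2 - 1))
  have hs : s ^ 2 = c ^ 2 + (ε ^ 2 - 1) := Real.sq_sqrt (by nlinarith)
  have : -c < s := by nlinarith [Real.sqrt_nonneg (c ^ 2 + (ε ^ 2 - 1))]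
  unfold radiusSphereOne
  linarith

theorem ofReal_mul_exp_mul_I_mem_sphere_one_iff {ε r : ℝ} (hε : 1 ≤ ε) (hr : 0 < r) (t : ℝ) :
    (r : ℂ) * exp (t * I) ∈ sphere (1 : ℂ) ε ↔ r = radiusSphereOne ε t := by
  set c := Real.cos t
  set s := √(c ^ 2 + (ε ^ 2 - 1))
  have hs : s ^ 2 = c ^ 2 + (ε ^ 2 - 1) := Real.sq_sqrt (by nlinarith)
  have hcs : c ≤ s := by nlinarith [Real.sqrt_nonneg (c ^ 2 + (ε ^ 2 - 1))]
  rw [mem_sphere, dist_eq_norm, ← sq_eq_sq₀ (norm_nonneg _) (by linarith),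
    norm_ofReal_mul_exp_mul_I_sub_one_sq, radiusSphereOne]
  constructor
  · intro h
    have : (r - (c + s)) * (r - (c - s)) = 0 := by linear_combination h - hs
    rcases mul_eq_zero.mp this with hplus | hminus <;> linarith
  · rintro rfl
    linear_combination hs

/-- For `n ≥ 2` and `ε > 1`, the level set `{z : |zⁿ - 1| = ε}` is connected. -/
theorem stmt18 (n : ℕ) (hn : 2 ≤ n) (ε : ℝ) (hε : 1 < ε) :
    IsConnected {z : ℂ | ‖z ^ n - 1‖ = ε} := by
  have hlevel : {z : ℂ | ‖z ^ n - 1‖ = ε} = (· ^ n) ⁻¹' sphere (1 : ℂ) ε := by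
    ext z
    simp
  rw [hlevel]
  exact isConnected_preimage_pow_of_radial (by omega) (continuous_radiusSphereOne ε)
    (radiusSphereOne_pos hε) (by simp [hε.ne]) fun r t hr ↦
      ofReal_mul_exp_mul_I_mem_sphere_one_iff hε.le hr t
end
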